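/- arXiv:2405.02848 — 2 statements merged into one kernel-verified Lean document; each statement's English description precedes it below -/
import Mathlib

section
/- Let H be a complex Hilbert space, let η be a bounded positive invertible operator on H, and let A be a bounded operator on H which is η-quasi-Hermitian, i.e. A† = η A η⁻¹. Then the spectrum of A is real: every λ in the spectrum of A (as an element of the Banach algebra of bounded operators on H over ℂ) satisfies λ ∈ ℝ. -/
/-!
The positive invertible `η` has a positive invertible square root `s`, with `η = s * s`.
Conjugating the relation `A† = η A η⁻¹` by `s` shows that `s A s⁻¹` is self-adjoint, so its
spectrum is real, and similar operators have the same spectrum.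
-/

open scoped InnerProductSpace ComplexOrder

def IsQuasiHermitian {R : Type*} [Monoid R] [Star R] (η : Rˣ) (a : R) : Prop :=
  star a = η * a * ↑η⁻¹

theorem IsQuasiHermitian.isSelfAdjoint_units_conj {R : Type*} [Monoid R] [StarMul R]
    {s : Rˣ} (hs : IsSelfAdjoint s) {a : R} (ha : IsQuasiHermitian (s * s) a) :
    IsSelfAdjoint (s * a * ↑s⁻¹ : R) := by
  rw [IsSelfAdjoint, star_mul, star_mul, ha, ← Units.coe_star, ← Units.coe_star, hs.star_eq,
    hs.inv.star_eq]
  simp [mul_assoc]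

theorem IsQuasiHermitian.mem_spectrum_eq_re {A : Type*} [CStarAlgebra A] [PartialOrder A]
    [StarOrderedRing A] {η : Aˣ} (hη : 0 ≤ (η : A)) {a : A} (ha : IsQuasiHermitian η a)
    {z : ℂ} (hz : z ∈ spectrum ℂ a) : z = z.re := by
  obtain ⟨s, hs⟩ := (CFC.isUnit_sqrt_iff (η : A)).2 η.isUnit
  have hss : s * s = η := Units.ext (by simpa [hs] using CFC.sqrt_mul_sqrt_self (η : A))
  have hs_sa : IsSelfAdjoint s := Units.ext <| by
    rw [Units.coe_star, hs]
    exact (CFC.sqrt_nonneg (η : A)).isSelfAdjoint.star_eq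
  have hconj := (hss ▸ ha : IsQuasiHermitian (s * s) a).isSelfAdjoint_units_conj hs_sa
  exact hconj.mem_spectrum_eq_re (by rwa [spectrum.units_conjugate])

theorem ContinuousLinearMap.isPositive_of_forall_inner_nonneg {E : Type*}
    [NormedAddCommGroup E] [InnerProductSpace ℂ E] (T : E →L[ℂ] E)
    (hT : ∀ x, 0 ≤ ⟪x, T x⟫_ℂ) : T.IsPositive := by
  refine T.isPositive_iff_complex.2 fun x => ?_
  have hreal : starRingEnd ℂ ⟪x, T x⟫_ℂ = ⟪x, T x⟫_ℂ := (IsSelfAdjoint.of_nonneg (hT x)).star_eq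
  rw [← inner_conj_symm, hreal]
  exact ⟨Complex.conj_eq_iff_re.1 hreal, (Complex.nonneg_iff.1 (hT x)).1⟩

theorem quasiHermitian_spectrum_real_general
    {H : Type*} [NormedAddCommGroup H] [InnerProductSpace ℂ H] [CompleteSpace H]
    (η : H →L[ℂ] H)
    (hpos : ∀ x : H, 0 ≤ ⟪x, η x⟫_ℂ)
    (ηinv : H →L[ℂ] H) (hinv₁ : ηinv ∘L η = 1) (hinv₂ : η ∘L ηinv = 1)
    (A : H →L[ℂ] H)
    (hqH : ContinuousLinearMap.adjoint A = η ∘L A ∘L ηinv) :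
    ∀ lam ∈ spectrum ℂ A, ∃ r : ℝ, lam = (r : ℂ) := by
  have hη : 0 ≤ η :=
    (η.nonneg_iff_isPositive).2 (η.isPositive_of_forall_inner_nonneg hpos)
  let u : (H →L[ℂ] H)ˣ := ⟨η, ηinv, hinv₂, hinv₁⟩
  have hA : IsQuasiHermitian u A := by
    rw [IsQuasiHermitian, ContinuousLinearMap.star_eq_adjoint, hqH]
    rfl
  exact fun lam hlam => ⟨lam.re, hA.mem_spectrum_eq_re hη hlam⟩

/-- **A quasi-Hermitian operator has real spectrum.**
If `η` is a bounded positive invertible operator on a complex Hilbert space `H`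
and `A` is a bounded operator with `A† = η A η⁻¹`, then every `λ` in the
spectrum of `A` is real. -/
theorem quasiHermitian_spectrum_real
    {H : Type*} [NormedAddCommGroup H] [InnerProductSpace ℂ H] [CompleteSpace H]
    (η : H →L[ℂ] H) (hsa : IsSelfAdjoint η)
    (hpos : ∀ x : H, 0 ≤ ⟪x, η x⟫_ℂ)
    (ηinv : H →L[ℂ] H) (hinv₁ : ηinv ∘L η = 1) (hinv₂ : η ∘L ηinv = 1)
    (A : H →L[ℂ] H)
    (hqH : ContinuousLinearMap.adjoint A = η ∘L A ∘L ηinv) :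
    ∀ lam ∈ spectrum ℂ A, ∃ r : ℝ, lam = (r : ℂ) :=
  quasiHermitian_spectrum_real_general η hpos ηinv hinv₁ hinv₂ A hqH
end

section
/- For all natural numbers l and m, the probabilists' Hermite polynomials are orthogonal with respect to the Gaussian weight: ∫_{−∞}^{∞} He_l(t) · He_m(t) · exp(−t²/2) dt = √(2π) · l! · δ_{lm}, where δ_{lm} = 1 if l = m and 0 otherwise. In particular, the harmonic-oscillator eigenfunctions φ_l(x) = (2^{−l}/(l! L √π))^{1/2} e^{−x²/(2L²)} H_l(x/L), with H_l the physicists' Hermite polynomial and L > 0, satisfy ∫_{−∞}^{∞} φ_l(x) φ_m(x) dx = δ_{lm}. -/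
open Real MeasureTheory

/-- The normalized `l`-th harmonic-oscillator eigenfunction with length scale `L`:
`φ_l(x) = (2^{−l}/(l! L √π))^{1/2} e^{−x²/(2L²)} H_l(x/L)`, where
`H_l(y) = 2^{l/2} He_l(√2 y)` is the `l`-th physicists' Hermite polynomial. -/
noncomputable def hoEigenfun (L : ℝ) (l : ℕ) (x : ℝ) : ℝ :=
  Real.sqrt ((1 / 2) ^ l / (l.factorial * L * Real.sqrt π)) *
    Real.exp (-(x ^ 2) / (2 * L ^ 2)) *
    (Real.sqrt 2 ^ l * Polynomial.aeval (Real.sqrt 2 * (x / L)) (Polynomial.hermite l))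

/-!
Write `G p (t) = p(t) e^{−t²/2}`. Since `(G p)' = G (p' − X p)` and both sides are integrable,
`∫ G (p' − X p) = 0`. Applied to `p = He_l q` with `He_{l+1} = X He_l − He_l'`, this moves a
derivative across: `∫ G (He_{l+1} q) = ∫ G (He_l q')`. As `He_{n+1}' = (n + 1) He_n`, iterating
lowers both indices together, ending at the Gaussian integral `√(2π)` when `l = m` and at
`He_0' = 0` otherwise. The eigenfunction statement is the substitution `t = √2 x / L`.
-/

open Polynomial

theorem integrable_pow_mul_exp_neg_mul_sq {b : ℝ} (hb : 0 < b) (n : ℕ) :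
    Integrable fun x : ℝ => x ^ n * exp (-b * x ^ 2) := by
  simpa [rpow_natCast] using
    integrable_rpow_mul_exp_neg_mul_sq hb (s := n) (by linarith [n.cast_nonneg (α := ℝ)])

noncomputable def gaussianWeighted (p : ℤ[X]) (t : ℝ) : ℝ :=
  aeval t p * exp (-(t ^ 2) / 2)

theorem gaussianWeighted_add (p q : ℤ[X]) (t : ℝ) :
    gaussianWeighted (p + q) t = gaussianWeighted p t + gaussianWeighted q t := by
  simp only [gaussianWeighted, map_add, add_mul]

theorem gaussianWeighted_sub (p q : ℤ[X]) (t : ℝ) :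
    gaussianWeighted (p - q) t = gaussianWeighted p t - gaussianWeighted q t := by
  simp only [gaussianWeighted, map_sub, sub_mul]

theorem integrable_gaussianWeighted (p : ℤ[X]) : Integrable (gaussianWeighted p) := by
  induction p using Polynomial.induction_on' with
  | add p q hp hq =>
    exact (hp.add hq).congr (.of_forall fun t => (gaussianWeighted_add p q t).symm)
  | monomial n a =>
    refine ((integrable_pow_mul_exp_neg_mul_sq (b := 1 / 2) one_half_pos n).const_mul
      (a : ℝ)).congr (.of_forall fun t => ?_)
    simp only [gaussianWeighted, aeval_monomial, algebraMap_int_eq, eq_intCast]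
    ring_nf

theorem hasDerivAt_gaussianWeighted (p : ℤ[X]) (t : ℝ) :
    HasDerivAt (gaussianWeighted p) (gaussianWeighted (derivative p - X * p) t) t := by
  have hexp : HasDerivAt (fun x : ℝ => exp (-(x ^ 2) / 2)) (exp (-(t ^ 2) / 2) * -t) t := by
    have h := ((hasDerivAt_pow 2 t).neg.div_const 2).exp
    simp only [Pi.neg_apply, Nat.cast_ofNat, Nat.add_one_sub_one, pow_one] at h
    convert h using 1
    ring
  refine ((p.hasDerivAt_aeval t).mul hexp).congr_deriv ?_
  simp only [gaussianWeighted, map_sub, map_mul, aeval_X]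
  ring

theorem integral_gaussianWeighted_derivative_sub_X_mul (p : ℤ[X]) :
    ∫ t, gaussianWeighted (derivative p - X * p) t = 0 :=
  integral_eq_zero_of_hasDerivAt_of_integrable (hasDerivAt_gaussianWeighted p)
    (integrable_gaussianWeighted _) (integrable_gaussianWeighted p)

theorem derivative_hermite_succ (n : ℕ) :
    derivative (hermite (n + 1)) = ((n : ℤ[X]) + 1) * hermite n := by
  induction n with
  | zero => simp [hermite_zero]
  | succ k ih =>
    rw [hermite_succ (k + 1), derivative_sub, derivative_mul, derivative_X, one_mul, ih,
      derivative_mul, hermite_succ k]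
    simp only [derivative_add, derivative_natCast, derivative_one, add_zero, zero_mul, zero_add]
    push_cast
    ring

theorem integral_gaussianWeighted_hermite_succ_mul (l : ℕ) (q : ℤ[X]) :
    ∫ t, gaussianWeighted (hermite (l + 1) * q) t
      = ∫ t, gaussianWeighted (hermite l * derivative q) t := by
  have hparts : derivative (hermite l * q) - X * (hermite l * q)
      = hermite l * derivative q - hermite (l + 1) * q := by
    rw [derivative_mul, hermite_succ]; ring
  have h := integral_gaussianWeighted_derivative_sub_X_mul (hermite l * q)
  simp_rw [hparts, gaussianWeighted_sub] at h
  rw [integral_sub (integrable_gaussianWeighted _)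
    (integrable_gaussianWeighted _)] at h
  linarith

theorem integral_gaussianWeighted_hermite_mul_hermite (l m : ℕ) :
    ∫ t, gaussianWeighted (hermite l * hermite m) t
      = sqrt (2 * π) * l.factorial * (if l = m then 1 else 0) := by
  induction l generalizing m with
  | zero =>
    cases m with
    | zero =>
      have hexp : ∀ t : ℝ, -(t ^ 2) / 2 = -(1 / 2) * t ^ 2 := fun t => by ring
      simp only [gaussianWeighted, hermite_zero, mul_one, map_one, one_mul, hexp,
        integral_gaussian, if_pos, Nat.factorial_zero, Nat.cast_one]
      norm_num [mul_comm]
    | succ k =>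
      rw [mul_comm, integral_gaussianWeighted_hermite_succ_mul]
      simp [hermite_zero, gaussianWeighted]
  | succ l ih =>
    rw [integral_gaussianWeighted_hermite_succ_mul]
    cases m with
    | zero => simp [hermite_zero, gaussianWeighted]
    | succ k =>
      have hscale : gaussianWeighted (hermite l * derivative (hermite (k + 1)))
          = fun t => ((k : ℝ) + 1) * gaussianWeighted (hermite l * hermite k) t := by
        ext t
        simp only [gaussianWeighted, derivative_hermite_succ, map_mul, map_add, map_natCast,
          map_one]
        ring
      rw [hscale, integral_const_mul, ih k]
      by_cases hlk : l = k
      · subst hlk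
        simp only [if_true, mul_one, Nat.factorial_succ, Nat.cast_mul, Nat.cast_add, Nat.cast_one]
        ring
      · simp [hlk]

noncomputable def hoEigenfunCoeff (L : ℝ) (l : ℕ) : ℝ :=
  sqrt ((1 / 2) ^ l / (l.factorial * L * sqrt π)) * sqrt 2 ^ l

theorem hoEigenfun_mul_hoEigenfun (L : ℝ) (l m : ℕ) (x : ℝ) :
    hoEigenfun L l x * hoEigenfun L m x = hoEigenfunCoeff L l * hoEigenfunCoeff L m *
      gaussianWeighted (hermite l * hermite m) (sqrt 2 / L * x) := by
  have hexp : exp (-(x ^ 2) / (2 * L ^ 2)) * exp (-(x ^ 2) / (2 * L ^ 2))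
      = exp (-((sqrt 2 / L * x) ^ 2) / 2) := by
    rw [← exp_add, mul_pow, div_pow, sq_sqrt zero_le_two]
    ring_nf
  simp only [hoEigenfun, hoEigenfunCoeff, gaussianWeighted, map_mul, ← hexp]
  ring_nf

theorem hoEigenfunCoeff_sq_mul {L : ℝ} (hL : 0 < L) (l : ℕ) :
    hoEigenfunCoeff L l ^ 2 * (L / sqrt 2 * (sqrt (2 * π) * l.factorial)) = 1 := by
  have hfac : (0 : ℝ) < l.factorial := by exact_mod_cast l.factorial_pos
  rw [hoEigenfunCoeff, mul_pow, sq_sqrt (by positivity), ← pow_mul, pow_mul', sq_sqrt zero_le_two,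
    sqrt_mul zero_le_two]
  field_simp
  rw [← mul_pow]
  norm_num

/-- **Orthogonality of Hermite polynomials and harmonic-oscillator eigenfunctions.**
For all `l, m`: `∫ He_l(t) He_m(t) e^{−t²/2} dt = √(2π)·l!·δ_{lm}`, and for `L > 0`
the normalized eigenfunctions satisfy `∫ φ_l(x) φ_m(x) dx = δ_{lm}`. -/
theorem hermite_orthogonality (L : ℝ) (hL : 0 < L) (l m : ℕ) :
    (∫ t : ℝ, (Polynomial.aeval t (Polynomial.hermite l) : ℝ) *
        Polynomial.aeval t (Polynomial.hermite m) * Real.exp (-(t ^ 2) / 2)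
      = Real.sqrt (2 * π) * l.factorial * (if l = m then 1 else 0)) ∧
    (∫ x : ℝ, hoEigenfun L l x * hoEigenfun L m x = (if l = m then 1 else 0)) := by
  refine ⟨by simpa only [gaussianWeighted, map_mul] using
    integral_gaussianWeighted_hermite_mul_hermite l m, ?_⟩
  simp_rw [hoEigenfun_mul_hoEigenfun]
  rw [integral_const_mul, Measure.integral_comp_mul_left, inv_div, abs_of_pos (by positivity),
    integral_gaussianWeighted_hermite_mul_hermite, smul_eq_mul]
  split_ifs with hlm
  · subst hlm
    simpa [sq] using hoEigenfunCoeff_sq_mul hL l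
  · simp
end
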